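/- For a triangle Δ in ℝ² with vertices p₁, p₂, p₃ and values y₁, y₂, y₃, let f be the affine function with f(pᵢ) = yᵢ, and let Δ' be the triangle in ℝ³ with vertices (pᵢ, yᵢ). Then area₃(Δ')² = area₂(Δ)² · (1 + ‖∇f‖²), and consequently ∫_Δ ‖∇f‖² dx = area₃(Δ')²/area₂(Δ) − area₂(Δ). -/

import Mathlib

open MeasureTheory RealInnerProductSpace

/-- The area of the planar triangle `ABC`. -/
noncomputable def triArea (A B C : EuclideanSpace ℝ (Fin 2)) : ℝ :=
  |((B 0 - A 0) * (C 1 - A 1) - (B 1 - A 1) * (C 0 - A 0))| / 2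

/-- The area of the lifted triangle in ℝ³ with vertices `(A, yA)`, `(B, yB)`, `(C, yC)`. -/
noncomputable def liftArea (A B C : EuclideanSpace ℝ (Fin 2)) (yA yB yC : ℝ) : ℝ :=
  Real.sqrt (((B 1 - A 1) * (yC - yA) - (yB - yA) * (C 1 - A 1)) ^ 2 +
      ((yB - yA) * (C 0 - A 0) - (B 0 - A 0) * (yC - yA)) ^ 2 +
      ((B 0 - A 0) * (C 1 - A 1) - (B 1 - A 1) * (C 0 - A 0)) ^ 2) / 2

section Aux
open Set ENNReal Pointwise

def stdTri : Set (Fin 2 → ℝ) := {x | 0 ≤ x 0 ∧ 0 ≤ x 1 ∧ x 0 + x 1 ≤ 1}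

lemma isClosed_stdTri : IsClosed stdTri := by
  have h0 : IsClosed {x : Fin 2 → ℝ | 0 ≤ x 0} := isClosed_le continuous_const (continuous_apply 0)
  have h1 : IsClosed {x : Fin 2 → ℝ | 0 ≤ x 1} := isClosed_le continuous_const (continuous_apply 1)
  have h2 : IsClosed {x : Fin 2 → ℝ | x 0 + x 1 ≤ 1} :=
    isClosed_le ((continuous_apply 0).add (continuous_apply 1)) continuous_const
  exact (h0.inter (h1.inter h2))

lemma diag_null : volume {x : Fin 2 → ℝ | x 0 + x 1 = 1} = 0 := by
  set l : (Fin 2 → ℝ) →ₗ[ℝ] ℝ := (LinearMap.proj 0 : (Fin 2 → ℝ) →ₗ[ℝ] ℝ) + (LinearMap.proj 1 : (Fin 2 → ℝ) →ₗ[ℝ] ℝ) with hl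
  have hker : volume (LinearMap.ker l : Set (Fin 2 → ℝ)) = 0 := by
    apply Measure.addHaar_submodule
    intro h
    have : (fun i : Fin 2 => (1:ℝ)) ∈ LinearMap.ker l := h ▸ Submodule.mem_top
    simp [hl, LinearMap.mem_ker] at this
  have hset : {x : Fin 2 → ℝ | x 0 + x 1 = 1} = (fun i : Fin 2 => if i = 0 then (1:ℝ) else 0) +ᵥ (LinearMap.ker l : Set (Fin 2 → ℝ)) := by
    ext x
    simp only [Set.mem_setOf_eq, Set.mem_vadd_set, LinearMap.mem_ker, SetLike.mem_coe]
    constructor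
    · intro h
      refine ⟨x - (fun i : Fin 2 => if i = 0 then (1:ℝ) else 0), ?_, ?_⟩
      · simp [hl]; linarith
      · simp [vadd_eq_add]
    · rintro ⟨y, hy, rfl⟩
      simp [hl, LinearMap.mem_ker] at hy ⊢
      linarith
  rw [hset, measure_vadd]
  exact hker

lemma volume_stdTri : volume stdTri = 1/2 := by
  set v : Fin 2 → ℝ := fun _ => 1 with hv
  set S2 : Set (Fin 2 → ℝ) := (fun x => v - x) ⁻¹' stdTri with hS2
  have hmp : MeasurePreserving (fun x : Fin 2 → ℝ => v - x) volume volume :=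
    (Measure.measurePreserving_sub_left volume v)
  have hmeas : volume S2 = volume stdTri := hmp.measure_preimage isClosed_stdTri.measurableSet.nullMeasurableSet
  have hunion : stdTri ∪ S2 = Set.pi Set.univ (fun _ : Fin 2 => Icc (0:ℝ) 1) := by
    ext x
    simp only [Set.mem_union, hS2, Set.mem_preimage, stdTri, Set.mem_setOf_eq, Set.mem_univ_pi,
      Fin.forall_fin_two, Set.mem_Icc, hv, Pi.sub_apply]
    constructor
    · rintro (⟨h0, h1, h2⟩ | ⟨h0, h1, h2⟩) <;> constructor <;> constructor <;> linarith
    · rintro ⟨⟨a, b⟩, c, d⟩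
      rcases le_total (x 0 + x 1) 1 with h | h
      · left; exact ⟨a, c, h⟩
      · right; exact ⟨by linarith, by linarith, by linarith⟩
  have hinter : stdTri ∩ S2 ⊆ {x : Fin 2 → ℝ | x 0 + x 1 = 1} := by
    rintro x ⟨⟨h0, h1, h2⟩, h3⟩
    simp only [hS2, Set.mem_preimage, stdTri, Set.mem_setOf_eq, hv, Pi.sub_apply] at h3
    obtain ⟨a, b, c⟩ := h3
    simp only [Set.mem_setOf_eq]
    linarith
  have hI : volume (stdTri ∩ S2) = 0 := measure_mono_null hinter diag_null
  have hsq : volume (Set.pi Set.univ (fun _ : Fin 2 => Icc (0:ℝ) 1)) = 1 := by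
    rw [volume_pi_pi]
    simp [Real.volume_Icc]
  have key : volume stdTri + volume S2 = 1 := by
    rw [← measure_union_add_inter₀ stdTri (hmp.measurable isClosed_stdTri.measurableSet).nullMeasurableSet, hunion, hsq, hI, add_zero]
  rw [hmeas] at key
  have : (2 : ℝ≥0∞) * volume stdTri = 1 := by rw [two_mul]; exact key
  exact (ENNReal.eq_div_iff two_ne_zero ENNReal.ofNat_ne_top).2 this


lemma convex_stdTri : Convex ℝ stdTri := by
  rintro x ⟨hx0, hx1, hx2⟩ y ⟨hy0, hy1, hy2⟩ a b ha hb hab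
  refine ⟨?_, ?_, ?_⟩ <;> simp only [Pi.add_apply, Pi.smul_apply, smul_eq_mul] <;> nlinarith

lemma convexHull_eq_stdTri :
    convexHull ℝ ({0, ![ (1:ℝ), 0], ![ (0:ℝ), 1]} : Set (Fin 2 → ℝ)) = stdTri := by
  apply le_antisymm
  · apply convexHull_min _ convex_stdTri
    rintro x (rfl | rfl | rfl) <;> norm_num [stdTri]
  · intro x hx
    obtain ⟨hx0, hx1, hx2⟩ := hx
    rw [convexHull_insert (by simp), convexHull_pair, mem_convexJoin]
    rcases eq_or_lt_of_le (by linarith : (0:ℝ) ≤ x 0 + x 1) with h | h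
    · have hx0' : x 0 = 0 := by linarith
      have hx1' : x 1 = 0 := by linarith
      have : x = 0 := by
        funext i; fin_cases i <;> simpa [hx0', hx1']
      subst this
      exact ⟨0, rfl, ![1,0], left_mem_segment ℝ _ _, left_mem_segment ℝ _ _⟩
    · set s := x 0 + x 1 with hs
      set z : Fin 2 → ℝ := (x 0 / s) • ![ (1:ℝ), 0] + (x 1 / s) • ![ (0:ℝ), 1] with hz
      have hzseg : z ∈ segment ℝ ![ (1:ℝ), 0] ![ (0:ℝ), 1] :=
        ⟨x 0 / s, x 1 / s, by positivity, by positivity, by field_simp; exact hs.symm, rfl⟩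
      refine ⟨0, rfl, z, hzseg, ?_⟩
      rw [segment_eq_image ℝ]
      refine ⟨s, ⟨le_of_lt h, hx2⟩, ?_⟩
      funext i
      fin_cases i <;> simp [hz, Matrix.cons_val_zero, Matrix.cons_val_one] <;>
        field_simp

lemma volume_triangle_pi (A B C : Fin 2 → ℝ) :
    volume (convexHull ℝ ({A, B, C} : Set (Fin 2 → ℝ))) =
      ENNReal.ofReal (|(B 0 - A 0) * (C 1 - A 1) - (B 1 - A 1) * (C 0 - A 0)| / 2) := by
  set L : (Fin 2 → ℝ) →ₗ[ℝ] (Fin 2 → ℝ) :=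
    ((LinearMap.proj 0 : (Fin 2 → ℝ) →ₗ[ℝ] ℝ).smulRight (B - A)) +
      ((LinearMap.proj 1 : (Fin 2 → ℝ) →ₗ[ℝ] ℝ).smulRight (C - A)) with hL
  have hLe0 : L ![ (1:ℝ), 0] = B - A := by
    simp [hL]
  have hLe1 : L ![ (0:ℝ), 1] = C - A := by
    simp [hL]
  have hdet : LinearMap.det L = (B 0 - A 0) * (C 1 - A 1) - (B 1 - A 1) * (C 0 - A 0) := by
    rw [← LinearMap.det_toMatrix (Pi.basisFun ℝ (Fin 2))]
    have : LinearMap.toMatrix (Pi.basisFun ℝ (Fin 2)) (Pi.basisFun ℝ (Fin 2)) L =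
        !![B 0 - A 0, C 0 - A 0; B 1 - A 1, C 1 - A 1] := by
      ext i j
      fin_cases i <;> fin_cases j <;>
        simp [LinearMap.toMatrix_apply, hL, Pi.basisFun_apply]
    rw [this, Matrix.det_fin_two_of]; ring
  have himg : convexHull ℝ ({A, B, C} : Set (Fin 2 → ℝ)) = A +ᵥ (L '' stdTri) := by
    rw [← convexHull_eq_stdTri, L.image_convexHull, ← convexHull_vadd]
    congr 1
    rw [← Set.image_vadd]
    simp only [Set.image_insert_eq, Set.image_singleton, map_zero, hLe0, hLe1, vadd_eq_add]
    rw [show A + 0 = A by abel, show A + (B - A) = B by abel, show A + (C - A) = C by abel]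
  rw [himg, measure_vadd, Measure.addHaar_image_linearMap, hdet, volume_stdTri]
  rw [ENNReal.ofReal_div_of_pos (by norm_num)]
  norm_num
  rfl




lemma volume_convexHull_eucl (p₁ p₂ p₃ : EuclideanSpace ℝ (Fin 2)) :
    volume (convexHull ℝ ({p₁, p₂, p₃} : Set (EuclideanSpace ℝ (Fin 2)))) =
      ENNReal.ofReal (triArea p₁ p₂ p₃) := by
  set K := convexHull ℝ ({p₁, p₂, p₃} : Set (EuclideanSpace ℝ (Fin 2))) with hK
  have hKc : IsCompact K := (Set.toFinite _).isCompact_convexHull ℝ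
  have h := (EuclideanSpace.volume_preserving_symm_measurableEquiv_toLp (Fin 2)).symm
  rw [← h.measure_preimage hKc.isClosed.measurableSet.nullMeasurableSet]
  set φ := (WithLp.linearEquiv 2 ℝ (Fin 2 → ℝ)) with hφ
  have hpre : (MeasurableEquiv.toLp 2 (Fin 2 → ℝ)).symm.symm ⁻¹' K = φ '' K := by
    ext x
    constructor
    · intro hx
      exact ⟨(MeasurableEquiv.toLp 2 (Fin 2 → ℝ)).symm.symm x, hx, rfl⟩
    · rintro ⟨y, hy, rfl⟩
      exact hy
  rw [hpre, hK, ← LinearEquiv.coe_coe, φ.toLinearMap.image_convexHull]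
  simp only [Set.image_insert_eq, Set.image_singleton, LinearEquiv.coe_coe]
  rw [volume_triangle_pi]
  rfl
end Aux

/-- For a nondegenerate planar triangle `p₁p₂p₃` with values `y₁, y₂, y₃`, affine
interpolant `f` and (constant) gradient `g` of `f`:
`area₃(Δ')² = area₂(Δ)²·(1 + ‖∇f‖²)`, and hence
`∫_Δ ‖∇f‖² = area₃(Δ')²/area₂(Δ) − area₂(Δ)`, where `Δ'` is the lifted triangle. -/


theorem lifted_area_dirichlet_identity (p₁ p₂ p₃ : EuclideanSpace ℝ (Fin 2))
    (hnd : 0 < triArea p₁ p₂ p₃) (y₁ y₂ y₃ : ℝ)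
    (f : EuclideanSpace ℝ (Fin 2) →ᵃ[ℝ] ℝ)
    (hf : f p₁ = y₁ ∧ f p₂ = y₂ ∧ f p₃ = y₃)
    (g : EuclideanSpace ℝ (Fin 2)) (hg : ∀ v, f.linear v = ⟪g, v⟫) :
    liftArea p₁ p₂ p₃ y₁ y₂ y₃ ^ 2 = triArea p₁ p₂ p₃ ^ 2 * (1 + ‖g‖ ^ 2) ∧
      (∫ _x in convexHull ℝ ({p₁, p₂, p₃} : Set (EuclideanSpace ℝ (Fin 2))), ‖g‖ ^ 2) =
        liftArea p₁ p₂ p₃ y₁ y₂ y₃ ^ 2 / triArea p₁ p₂ p₃ - triArea p₁ p₂ p₃ := by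
  obtain ⟨hf1, hf2, hf3⟩ := hf
  have hv : y₂ - y₁ = g 0 * (p₂ 0 - p₁ 0) + g 1 * (p₂ 1 - p₁ 1) := by
    have h := hg (p₂ - p₁)
    rw [show p₂ - p₁ = p₂ -ᵥ p₁ from rfl, AffineMap.linearMap_vsub, hf1, hf2] at h
    rw [show y₂ - y₁ = y₂ -ᵥ y₁ from rfl, h, PiLp.inner_apply]
    simp [RCLike.inner_apply, Fin.sum_univ_two]
    ring
  have hw : y₃ - y₁ = g 0 * (p₃ 0 - p₁ 0) + g 1 * (p₃ 1 - p₁ 1) := by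
    have h := hg (p₃ - p₁)
    rw [show p₃ - p₁ = p₃ -ᵥ p₁ from rfl, AffineMap.linearMap_vsub, hf1, hf3] at h
    rw [show y₃ - y₁ = y₃ -ᵥ y₁ from rfl, h, PiLp.inner_apply]
    simp [RCLike.inner_apply, Fin.sum_univ_two]
    ring
  have hnorm : ‖g‖ ^ 2 = g 0 ^ 2 + g 1 ^ 2 := by
    rw [← real_inner_self_eq_norm_sq, PiLp.inner_apply]
    simp [RCLike.inner_apply, Fin.sum_univ_two, sq]
  have part1 : liftArea p₁ p₂ p₃ y₁ y₂ y₃ ^ 2 = triArea p₁ p₂ p₃ ^ 2 * (1 + ‖g‖ ^ 2) := by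
    rw [liftArea, triArea, div_pow, div_pow, Real.sq_sqrt (by positivity), sq_abs, hnorm,
      hv, hw]
    ring
  refine ⟨part1, ?_⟩
  rw [setIntegral_const, measureReal_def, volume_convexHull_eucl, ENNReal.toReal_ofReal hnd.le, smul_eq_mul,
    part1]
  field_simp
  ring
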